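/- With f : B(2) → B(2) the radial homeomorphism from the preceding construction, the restriction f : B(1) → B(1) is not φ-FQC for any self-homeomorphism φ of [0,∞); consequently f is not quasiconformal. In particular, there exist coarsely quasihyperbolic homeomorphisms of planar domains that are not quasiconformal. -/

import Mathlib

open Set Metric MeasureTheory

noncomputable section

variable {E : Type*} [NormedAddCommGroup E]

/-- Distance from a point to the boundary (= complement) of `D`. -/
def dB (D : Set E) (z : E) : ℝ := Metric.infDist z Dᶜ

/-- `D` is a proper subdomain of the ambient space. -/
def IsProperDomain (D : Set E) : Prop := IsOpen D ∧ IsConnected D ∧ Dᶜ.Nonempty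

/-- A rectifiable arc inside `D`, parametrized by arclength on `[a,b]`. -/
structure IsArc (D : Set E) (γ : ℝ → E) (a b : ℝ) : Prop where
  le : a ≤ b
  lip : LipschitzOnWith 1 γ (Set.Icc a b)
  unit : ∀ s t, s ∈ Set.Icc a b → t ∈ Set.Icc a b → s ≤ t →
    eVariationOn γ (Set.Icc s t) = ENNReal.ofReal (t - s)
  mem : ∀ t ∈ Set.Icc a b, γ t ∈ D

/-- Quasihyperbolic length of the piece on `[a,b]` of an arclength-parametrized arc. -/
def qhLen (D : Set E) (γ : ℝ → E) (a b : ℝ) : ℝ := ∫ t in a..b, 1 / dB D (γ t)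

/-- The quasihyperbolic distance in `D`: infimum of quasihyperbolic lengths of
arcs joining the two points. -/
def qhDist (D : Set E) (x y : E) : ℝ :=
  sInf { L : ℝ | ∃ T : ℝ, ∃ γ : ℝ → E,
    IsArc D γ 0 T ∧ γ 0 = x ∧ γ T = y ∧ L = qhLen D γ 0 T }

/-- `γ` is a `c`-quasigeodesic in `D` on `[a,b]`. -/
def IsQuasigeodesicOn (D : Set E) (c : ℝ) (γ : ℝ → E) (a b : ℝ) : Prop :=
  IsArc D γ a b ∧ ∀ s t, s ∈ Set.Icc a b → t ∈ Set.Icc a b → s ≤ t →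
    qhLen D γ s t ≤ c * qhDist D (γ s) (γ t)

/-- The coefficient `c_{x,y}^λ = min (1 + λ/(2 k_D(x,y))) (9/8)`. -/
def cLam (D : Set E) (lam : ℝ) (x y : E) : ℝ :=
  min (1 + lam / (2 * qhDist D x y)) (9 / 8)

/-- `γ` is a `λ`-curve in `D` on `[a,b]`: a `c_{x,y}^λ`-quasigeodesic where `x,y`
are its endpoints. -/
def IsLamCurve (D : Set E) (lam : ℝ) (γ : ℝ → E) (a b : ℝ) : Prop :=
  IsQuasigeodesicOn D (cLam D lam (γ a) (γ b)) γ a b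

/-- `γ` is `h`-short in `D`. -/
def IsShort (D : Set E) (h : ℝ) (γ : ℝ → E) (a b : ℝ) : Prop :=
  IsArc D γ a b ∧ ∀ s t, s ∈ Set.Icc a b → t ∈ Set.Icc a b → s ≤ t →
    qhLen D γ s t ≤ qhDist D (γ s) (γ t) + h

/-- The point `w` lies within quasihyperbolic distance `C` of the union of the
two given sides. -/
def WithinOfSides (D : Set E) (C : ℝ) (w : E) (α : ℝ → E) (a b : ℝ)
    (α' : ℝ → E) (a' b' : ℝ) : Prop :=
  ∃ s : ℝ, (s ∈ Set.Icc a b ∧ qhDist D w (α s) ≤ C) ∨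
    (s ∈ Set.Icc a' b' ∧ qhDist D w (α' s) ≤ C)

/-- `(D, k_D)` is a `(C,h)`-Rips space: every side of an `h`-short triangle lies
in the `C`-neighbourhood of the two other sides. -/
def IsRips (D : Set E) (C h : ℝ) : Prop :=
  ∀ (α₁ α₂ α₃ : ℝ → E) (a₁ b₁ a₂ b₂ a₃ b₃ : ℝ),
    IsShort D h α₁ a₁ b₁ → IsShort D h α₂ a₂ b₂ → IsShort D h α₃ a₃ b₃ →
    α₁ b₁ = α₂ a₂ → α₂ b₂ = α₃ a₃ → α₃ b₃ = α₁ a₁ →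
    (∀ t ∈ Set.Icc a₁ b₁, WithinOfSides D C (α₁ t) α₂ a₂ b₂ α₃ a₃ b₃) ∧
    (∀ t ∈ Set.Icc a₂ b₂, WithinOfSides D C (α₂ t) α₃ a₃ b₃ α₁ a₁ b₁) ∧
    (∀ t ∈ Set.Icc a₃ b₃, WithinOfSides D C (α₃ t) α₁ a₁ b₁ α₂ a₂ b₂)

/-- `D` is `δ`-Gromov hyperbolic with respect to the quasihyperbolic metric. -/
def IsGromovHyp (D : Set E) (δ : ℝ) : Prop :=
  ∀ x ∈ D, ∀ y ∈ D, ∀ z ∈ D, ∀ p ∈ D,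
    min ((qhDist D p x + qhDist D p y - qhDist D x y) / 2)
        ((qhDist D p y + qhDist D p z - qhDist D y z) / 2) - δ ≤
      (qhDist D p x + qhDist D p z - qhDist D x z) / 2

/-- `μ` is a thin-triangles constant for triangles of `c₀`-quasigeodesics in `D`. -/
def ThinTriangles (D : Set E) (c₀ μ : ℝ) : Prop :=
  ∀ (γ₁ γ₂ γ₃ : ℝ → E) (a₁ b₁ a₂ b₂ a₃ b₃ : ℝ),
    IsQuasigeodesicOn D c₀ γ₁ a₁ b₁ → IsQuasigeodesicOn D c₀ γ₂ a₂ b₂ →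
    IsQuasigeodesicOn D c₀ γ₃ a₃ b₃ →
    γ₁ b₁ = γ₂ a₂ → γ₂ b₂ = γ₃ a₃ → γ₃ b₃ = γ₁ a₁ →
    ∀ t ∈ Set.Icc a₁ b₁, WithinOfSides D μ (γ₁ t) γ₂ a₂ b₂ γ₃ a₃ b₃

/-- `D` is a `c`-uniform domain. -/
def IsUniform (D : Set E) (c : ℝ) : Prop :=
  ∀ z₁ ∈ D, ∀ z₂ ∈ D, ∃ γ : ℝ → E, ∃ a b : ℝ, IsArc D γ a b ∧ γ a = z₁ ∧ γ b = z₂ ∧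
    (∀ t ∈ Set.Icc a b, min (t - a) (b - t) ≤ c * dB D (γ t)) ∧
    b - a ≤ c * ‖z₁ - z₂‖

/-- `D` is an `a`-John domain. -/
def IsJohn (D : Set E) (a : ℝ) : Prop :=
  ∀ z₁ ∈ D, ∀ z₂ ∈ D, ∃ γ : ℝ → E, ∃ s t : ℝ, IsArc D γ s t ∧ γ s = z₁ ∧ γ t = z₂ ∧
    ∀ u ∈ Set.Icc s t, min (u - s) (t - u) ≤ a * dB D (γ u)

/-- The inner (length) distance in `D`. -/
def innerDist (D : Set E) (x y : E) : ℝ :=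
  sInf { L : ℝ | ∃ γ : ℝ → E, ∃ s t : ℝ, IsArc D γ s t ∧ γ s = x ∧ γ t = y ∧ L = t - s }

/-- `γ` is an inner `b`-uniform curve in `D`. -/
def IsInnerUniformCurve (D : Set E) (b : ℝ) (γ : ℝ → E) (s t : ℝ) : Prop :=
  (∀ u ∈ Set.Icc s t, min (u - s) (t - u) ≤ b * dB D (γ u)) ∧
  t - s ≤ b * innerDist D (γ s) (γ t)

/-- `D` is an inner `b`-uniform domain. -/
def IsInnerUniform (D : Set E) (b : ℝ) : Prop :=
  ∀ z₁ ∈ D, ∀ z₂ ∈ D, ∃ γ : ℝ → E, ∃ s t : ℝ,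
    IsArc D γ s t ∧ γ s = z₁ ∧ γ t = z₂ ∧ IsInnerUniformCurve D b γ s t

/-- Length (total variation) of a curve on `[a,b]`. -/
def lenOn {F : Type*} [NormedAddCommGroup F] (γ : ℝ → F) (a b : ℝ) : ℝ :=
  (eVariationOn γ (Set.Icc a b)).toReal

variable {F : Type*} [NormedAddCommGroup F]

/-- `f` is a homeomorphism from `D` onto `D'`. -/
def IsHomeoOn (f : E → F) (D : Set E) (D' : Set F) : Prop :=
  ∃ g : F → E, ContinuousOn f D ∧ ContinuousOn g D' ∧ Set.MapsTo f D D' ∧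
    Set.MapsTo g D' D ∧ (∀ x ∈ D, g (f x) = x) ∧ (∀ y ∈ D', f (g y) = y)

/-- `f : D → D'` is `(M,C)`-coarsely quasihyperbolic. -/
def IsCQH (f : E → F) (D : Set E) (D' : Set F) (M C : ℝ) : Prop :=
  ∀ x ∈ D, ∀ y ∈ D,
    (qhDist D x y - C) / M ≤ qhDist D' (f x) (f y) ∧
    qhDist D' (f x) (f y) ≤ M * qhDist D x y + C

/-- The slopes `a_n` from the construction of Example 1. -/
def aseq (n : ℕ) : ℝ :=
  ((2 : ℝ) ^ (n + 1).factorial * ((2 : ℝ) ^ ((n + 2).factorial - (n + 1).factorial) - 1)) /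
    ((2 : ℝ) ^ (n + 2).factorial * ((2 : ℝ) ^ ((n + 1).factorial - n.factorial) - 1))

/-- The intercepts `b_n` from the construction of Example 1. -/
def bseq (n : ℕ) : ℝ :=
  1 - 1 / (2 : ℝ) ^ (n + 1).factorial - aseq n * (1 - 1 / (2 : ℝ) ^ n.factorial)

/-- For `t ∈ [1/2, 1)`, the index `n` with `1 - 2^{-n!} ≤ t < 1 - 2^{-(n+1)!}`. -/
def nIdx (t : ℝ) : ℕ := sSup {n : ℕ | 1 - 1 / (2 : ℝ) ^ n.factorial ≤ t}

/-- The radial homeomorphism `g : [0,2) → [0,2)` of Example 1. -/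
def gfun (t : ℝ) : ℝ :=
  if t < 1 / 2 then 3 / 2 * t
  else if t < 1 then aseq (nIdx t) * t + bseq (nIdx t)
  else t

/-- The map `f(x) = g(|x|) x / |x|` of Example 1 on the disk `B(2) ⊂ ℂ`. -/
def fmap (x : ℂ) : ℂ := if x = 0 then 0 else (gfun ‖x‖ / ‖x‖) • x

/-!
Two points of the circle of radius `r = 1 - 2^{-m!}` at Euclidean distance `1 - r` are joined by
a chord that stays at distance `≥ 1 - r` from the boundary, so their quasihyperbolic distance is
at most `1`. The map `f` preserves arguments and sends this circle to the circle of radius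
`R = 1 - 2^{-(m+1)!}`, so the images are still at Euclidean distance `≥ 1 - r` but only
`1 - R` from the boundary. The lower bound `k(x, y) ≥ log (1 + |x - y| / d(x))` then gives
`k(f x, f y) ≥ log ((1 - r) / (1 - R)) = m · m! · log 2`, which is unbounded, whereas a
`φ`-FQC map would keep it below `φ 1`.
-/

section QuasihyperbolicMetric

variable {D : Set E} {γ : ℝ → E} {a b : ℝ}

theorem IsArc.of_isometry (hγ : Isometry γ) (hab : a ≤ b) (hD : MapsTo γ (Icc a b) D) :
    IsArc D γ a b where
  le := hab
  lip := hγ.lipschitz.lipschitzOnWith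
  unit s t _ _ hst := by
    refine le_antisymm ?_ ?_
    · simpa using hγ.lipschitz.lipschitzOnWith.comp_eVariationOn_le (mapsTo_id (Icc s t))
    · have h := eVariationOn.edist_le γ (left_mem_Icc.2 hst) (right_mem_Icc.2 hst)
      rwa [hγ.edist_eq, edist_dist, dist_comm, Real.dist_eq, abs_of_nonneg (sub_nonneg.2 hst)] at h
  mem := hD

theorem isArc_const {x : E} (hx : x ∈ D) : IsArc D (fun _ => x) a a where
  le := le_rfl
  lip := (LipschitzWith.const' x).lipschitzOnWith
  unit s t hs ht _ := by
    rw [le_antisymm hs.2 hs.1, le_antisymm ht.2 ht.1, Icc_self,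
      eVariationOn.subsingleton _ subsingleton_singleton, sub_self, ENNReal.ofReal_zero]
  mem _ _ := hx

theorem dB_nonneg (D : Set E) (z : E) : 0 ≤ dB D z := infDist_nonneg

theorem continuous_dB (D : Set E) : Continuous (dB D) := continuous_infDist_pt Dᶜ

theorem dB_pos (hD : IsOpen D) (hDc : Dᶜ.Nonempty) {z : E} (hz : z ∈ D) : 0 < dB D z :=
  (hD.isClosed_compl.notMem_iff_infDist_pos hDc).1 (not_not.2 hz)

theorem qhLen_nonneg (D : Set E) (γ : ℝ → E) (hab : a ≤ b) : 0 ≤ qhLen D γ a b :=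
  intervalIntegral.integral_nonneg hab fun _ _ => one_div_nonneg.2 (dB_nonneg D _)

theorem qhDist_nonneg (D : Set E) (x y : E) : 0 ≤ qhDist D x y :=
  Real.sInf_nonneg <| by rintro _ ⟨T, γ, hγ, -, -, rfl⟩; exact qhLen_nonneg D γ hγ.le

theorem qhDist_le_qhLen {T : ℝ} (hγ : IsArc D γ 0 T) : qhDist D (γ 0) (γ T) ≤ qhLen D γ 0 T :=
  csInf_le ⟨0, by rintro _ ⟨T, γ, hγ, -, -, rfl⟩; exact qhLen_nonneg D γ hγ.le⟩
    ⟨T, γ, hγ, rfl, rfl, rfl⟩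

theorem IsArc.intervalIntegrable_one_div_dB (hγ : IsArc D γ a b)
    (hpos : ∀ t ∈ Icc a b, 0 < dB D (γ t)) :
    IntervalIntegrable (fun t => 1 / dB D (γ t)) volume a b := by
  refine ContinuousOn.intervalIntegrable ?_
  rw [uIcc_of_le hγ.le]
  exact continuousOn_const.div ((continuous_dB D).comp_continuousOn hγ.lip.continuousOn)
    fun t ht => (hpos t ht).ne'

theorem IsArc.qhLen_le (hγ : IsArc D γ a b) {c : ℝ} (hc : 0 < c)
    (h : ∀ t ∈ Icc a b, c ≤ dB D (γ t)) : qhLen D γ a b ≤ (b - a) / c := by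
  calc qhLen D γ a b ≤ ∫ _ in a..b, 1 / c :=
        intervalIntegral.integral_mono_on hγ.le
          (hγ.intervalIntegrable_one_div_dB fun t ht => hc.trans_le (h t ht))
          intervalIntegrable_const fun t ht => one_div_le_one_div_of_le hc (h t ht)
    _ = (b - a) / c := by simp [div_eq_mul_inv]

/-- The boundary distance grows at most at unit speed along an arc, so `1 / dB` dominates
`1 / (dB (γ a) + (t - a))`, whose integral is the logarithm. -/
theorem IsArc.log_le_qhLen (hD : IsOpen D) (hDc : Dᶜ.Nonempty) (hγ : IsArc D γ a b) :
    Real.log (1 + ‖γ b - γ a‖ / dB D (γ a)) ≤ qhLen D γ a b := by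
  set c := dB D (γ a)
  have hc : 0 < c := dB_pos hD hDc (hγ.mem a (left_mem_Icc.2 hγ.le))
  have hdist : ∀ t ∈ Icc a b, dist (γ t) (γ a) ≤ t - a := fun t ht => by
    simpa [Real.dist_eq, abs_of_nonneg (sub_nonneg.2 ht.1)] using
      hγ.lip.dist_le_mul t ht a (left_mem_Icc.2 hγ.le)
  have hbound : ∀ t ∈ Icc a b, 1 / (t + (c - a)) ≤ 1 / dB D (γ t) := fun t ht => by
    have : dB D (γ t) ≤ c + dist (γ t) (γ a) := infDist_le_infDist_add_dist
    exact one_div_le_one_div_of_le (dB_pos hD hDc (hγ.mem t ht)) (by linarith [hdist t ht])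
  have hzero : (0 : ℝ) ∉ uIcc (a + (c - a)) (b + (c - a)) := by
    rw [uIcc_of_le (by linarith [hγ.le])]
    exact fun h => by linarith [h.1]
  calc Real.log (1 + ‖γ b - γ a‖ / c)
      ≤ Real.log ((b + (c - a)) / (a + (c - a))) := by
        refine Real.log_le_log (by positivity) ?_
        have := hdist b (right_mem_Icc.2 hγ.le)
        rw [dist_eq_norm] at this
        rw [show a + (c - a) = c by ring, show b + (c - a) = c + (b - a) by ring, add_div,
          div_self hc.ne']
        gcongr
    _ = ∫ t in a..b, 1 / (t + (c - a)) := by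
        rw [intervalIntegral.integral_comp_add_right (fun u => 1 / u), integral_one_div hzero]
    _ ≤ qhLen D γ a b := by
        refine intervalIntegral.integral_mono_on hγ.le ?_
          (hγ.intervalIntegrable_one_div_dB fun t ht => dB_pos hD hDc (hγ.mem t ht)) hbound
        refine ContinuousOn.intervalIntegrable ?_
        exact continuousOn_const.div (by fun_prop) fun t ht => by
          rw [uIcc_of_le hγ.le] at ht
          linarith [ht.1]

end QuasihyperbolicMetric

section Segment

variable [NormedSpace ℝ E] {D : Set E} {x y : E}

theorem exists_isArc_segment (hD : segment ℝ x y ⊆ D) :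
    ∃ γ : ℝ → E, IsArc D γ 0 ‖y - x‖ ∧ γ 0 = x ∧ γ ‖y - x‖ = y ∧
      MapsTo γ (Icc 0 ‖y - x‖) (segment ℝ x y) := by
  obtain rfl | hxy := eq_or_ne x y
  · refine ⟨fun _ => x, ?_, rfl, rfl, fun _ _ => left_mem_segment ℝ x x⟩
    simpa using isArc_const (a := 0) (hD (left_mem_segment ℝ x x))
  have hT : 0 < ‖y - x‖ := norm_pos_iff.2 (sub_ne_zero.2 hxy.symm)
  set γ : ℝ → E := fun t => AffineMap.lineMap x y (t / ‖y - x‖)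
  have hseg : MapsTo γ (Icc 0 ‖y - x‖) (segment ℝ x y) := fun t ht => by
    rw [segment_eq_image_lineMap]
    exact mem_image_of_mem _ ⟨div_nonneg ht.1 hT.le, (div_le_one hT).2 ht.2⟩
  have hiso : Isometry γ := Isometry.of_dist_eq fun s t => by
    rw [dist_lineMap_lineMap, dist_eq_norm' x y, Real.dist_eq, ← sub_div, abs_div,
      abs_of_pos hT, div_mul_cancel₀ _ hT.ne', Real.dist_eq]
  exact ⟨γ, .of_isometry hiso hT.le (hseg.mono_right hD), by simp [γ], by simp [γ, hT.ne'],
    hseg⟩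

theorem qhDist_le_of_segment (hD : segment ℝ x y ⊆ D) {c : ℝ} (hc : 0 < c)
    (h : ∀ z ∈ segment ℝ x y, c ≤ dB D z) : qhDist D x y ≤ ‖y - x‖ / c := by
  obtain ⟨γ, hγ, hγ0, hγT, hseg⟩ := exists_isArc_segment hD
  calc qhDist D x y = qhDist D (γ 0) (γ ‖y - x‖) := by rw [hγ0, hγT]
    _ ≤ qhLen D γ 0 ‖y - x‖ := qhDist_le_qhLen hγ
    _ ≤ (‖y - x‖ - 0) / c := hγ.qhLen_le hc fun t ht => h _ (hseg ht)
    _ = ‖y - x‖ / c := by rw [sub_zero]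

/-- The segment hypothesis only ensures that some arc joins `x` and `y`, so that the infimum
defining `qhDist` is not `sInf ∅ = 0`. -/
theorem log_le_qhDist (hD : IsOpen D) (hDc : Dᶜ.Nonempty) (hseg : segment ℝ x y ⊆ D) :
    Real.log (1 + ‖y - x‖ / dB D x) ≤ qhDist D x y := by
  obtain ⟨γ, hγ, hγ0, hγT, -⟩ := exists_isArc_segment hseg
  refine le_csInf ⟨_, _, γ, hγ, hγ0, hγT, rfl⟩ ?_
  rintro _ ⟨T, β, hβ, rfl, rfl, rfl⟩
  exact hβ.log_le_qhLen hD hDc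

theorem dB_ball_zero [Nontrivial E] {ρ : ℝ} {z : E} (hz : ‖z‖ ≤ ρ) :
    dB (ball (0 : E) ρ) z = ρ - ‖z‖ := by
  have hρ : 0 ≤ ρ := (norm_nonneg z).trans hz
  obtain ⟨w, hw, hzw⟩ : ∃ w : E, ‖w‖ = ρ ∧ dist z w = ρ - ‖z‖ := by
    obtain rfl | hz0 := eq_or_ne z 0
    · obtain ⟨w, hw⟩ := exists_norm_eq E hρ
      exact ⟨w, hw, by simp [hw]⟩
    have hn : 0 < ‖z‖ := norm_pos_iff.2 hz0
    refine ⟨(ρ / ‖z‖) • z, ?_, ?_⟩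
    · rw [norm_smul, Real.norm_of_nonneg (by positivity), div_mul_cancel₀ _ hn.ne']
    · have hρz : 1 ≤ ρ / ‖z‖ := (one_le_div hn).2 hz
      have hsub : z - (ρ / ‖z‖) • z = -((ρ / ‖z‖ - 1) • z) := by
        rw [sub_smul, one_smul, neg_sub]
      rw [dist_eq_norm, hsub, norm_neg, norm_smul, Real.norm_of_nonneg (by linarith), sub_mul,
        div_mul_cancel₀ _ hn.ne', one_mul]
  have hw' : w ∈ (ball (0 : E) ρ)ᶜ := by simp [hw]
  refine le_antisymm (hzw ▸ infDist_le_dist_of_mem hw') ((le_infDist ⟨w, hw'⟩).2 fun v hv => ?_)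
  simp only [mem_compl_iff, mem_ball, dist_zero_right, not_lt] at hv
  linarith [norm_sub_norm_le v z, dist_eq_norm' z v]

theorem qhDist_ball_le [Nontrivial E] {ρ r : ℝ} (hr : r < ρ) (hx : ‖x‖ ≤ r) (hy : ‖y‖ ≤ r) :
    qhDist (ball (0 : E) ρ) x y ≤ ‖y - x‖ / (ρ - r) := by
  have hseg : segment ℝ x y ⊆ closedBall 0 r :=
    (convex_closedBall 0 r).segment_subset (mem_closedBall_zero_iff.2 hx)
      (mem_closedBall_zero_iff.2 hy)
  refine qhDist_le_of_segment (hseg.trans (closedBall_subset_ball hr)) (sub_pos.2 hr)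
    fun z hz => ?_
  have hzr := mem_closedBall_zero_iff.1 (hseg hz)
  rw [dB_ball_zero (hzr.trans hr.le)]
  linarith

theorem log_le_qhDist_ball [Nontrivial E] {ρ : ℝ} (hx : ‖x‖ < ρ) (hy : ‖y‖ < ρ) :
    Real.log (1 + ‖y - x‖ / (ρ - ‖x‖)) ≤ qhDist (ball (0 : E) ρ) x y := by
  obtain ⟨w, hw⟩ := exists_norm_eq E ((norm_nonneg x).trans hx.le)
  rw [← dB_ball_zero hx.le]
  exact log_le_qhDist isOpen_ball ⟨w, by simp [hw]⟩
    ((convex_ball 0 ρ).segment_subset (mem_ball_zero_iff.2 hx) (mem_ball_zero_iff.2 hy))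

theorem qhDist_smul_le [Nontrivial E] {r : ℝ} (hr0 : 0 ≤ r) (hr : r < 1) {u v : E}
    (hu : ‖u‖ = 1) (hv : ‖v‖ = 1) :
    qhDist (ball (0 : E) 1) (r • u) (r • v) ≤ r * ‖v - u‖ / (1 - r) := by
  rw [← norm_smul_of_nonneg hr0, smul_sub]
  exact qhDist_ball_le hr (by rw [norm_smul_of_nonneg hr0, hu, mul_one])
    (by rw [norm_smul_of_nonneg hr0, hv, mul_one])

theorem log_le_qhDist_smul [Nontrivial E] {r : ℝ} (hr0 : 0 ≤ r) (hr : r < 1) {u v : E}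
    (hu : ‖u‖ = 1) (hv : ‖v‖ = 1) :
    Real.log (1 + r * ‖v - u‖ / (1 - r)) ≤ qhDist (ball (0 : E) 1) (r • u) (r • v) := by
  have hnorm {w : E} (hw : ‖w‖ = 1) : ‖r • w‖ = r := by rw [norm_smul_of_nonneg hr0, hw, mul_one]
  have := log_le_qhDist_ball (ρ := 1) ((hnorm hu).trans_lt hr) ((hnorm hv).trans_lt hr)
  rwa [← smul_sub, norm_smul_of_nonneg hr0, hnorm hu] at this

end Segment

theorem exists_norm_eq_one_norm_sub_one_eq {s : ℝ} (hs : s ∈ Icc (0 : ℝ) 2) :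
    ∃ u : ℂ, ‖u‖ = 1 ∧ ‖u - 1‖ = s := by
  have hcont : ContinuousOn (fun θ : ℝ => ‖Complex.exp (θ * Complex.I) - 1‖) (Icc 0 Real.pi) := by
    fun_prop
  obtain ⟨θ, -, hθ⟩ := intermediate_value_Icc Real.pi_pos.le hcont
    (by norm_num [Complex.exp_pi_mul_I]; exact hs)
  exact ⟨_, Complex.norm_exp_ofReal_mul_I θ, hθ⟩

theorem fmap_smul {r : ℝ} (hr : 0 < r) {u : ℂ} (hu : ‖u‖ = 1) : fmap (r • u) = gfun r • u := by
  have hnorm : ‖r • u‖ = r := by rw [norm_smul, hu, mul_one, Real.norm_of_nonneg hr.le]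
  rw [fmap, if_neg (norm_pos_iff.1 (hnorm.symm ▸ hr)), hnorm, smul_smul, div_mul_cancel₀ _ hr.ne']

/-- The breakpoints of the piecewise affine map `gfun`. -/
def knot (n : ℕ) : ℝ := 1 - 1 / 2 ^ n.factorial

theorem knot_lt_one (n : ℕ) : knot n < 1 := by
  unfold knot
  linarith [show (0 : ℝ) < 1 / 2 ^ n.factorial by positivity]

theorem knot_le_knot_iff {m n : ℕ} (hn : 1 ≤ n) : knot m ≤ knot n ↔ m ≤ n := by
  rw [knot, knot, sub_le_sub_iff_left, one_div_le_one_div (by positivity) (by positivity),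
    pow_le_pow_iff_right₀ one_lt_two]
  exact ⟨fun h => not_lt.1 fun hnm => h.not_gt ((Nat.factorial_lt hn).2 hnm), Nat.factorial_le⟩

theorem one_half_le_knot {n : ℕ} (hn : 1 ≤ n) : 1 / 2 ≤ knot n := by
  have := (knot_le_knot_iff hn).2 hn
  norm_num [knot] at this ⊢
  linarith

theorem nIdx_knot {n : ℕ} (hn : 1 ≤ n) : nIdx (knot n) = n := by
  have hset : {m : ℕ | 1 - 1 / (2 : ℝ) ^ m.factorial ≤ knot n} = Iic n :=
    Set.ext fun _ => knot_le_knot_iff hn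
  rw [nIdx, hset, csSup_Iic]

theorem gfun_knot {n : ℕ} (hn : 1 ≤ n) : gfun (knot n) = knot (n + 1) := by
  rw [gfun, if_neg (one_half_le_knot hn).not_gt, if_pos (knot_lt_one n), nIdx_knot hn, bseq]
  simp only [knot]
  ring

theorem log_one_sub_knot_div (n : ℕ) :
    Real.log ((1 - knot n) / (1 - knot (n + 1))) = n * n.factorial * Real.log 2 := by
  simp only [knot, sub_sub_cancel, one_div, div_inv_eq_mul, inv_mul_eq_div]
  rw [Real.log_div (by positivity) (by positivity), Real.log_pow, Real.log_pow,
    Nat.factorial_succ]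
  push_cast
  ring

theorem exists_qhDist_le_one_le_qhDist_fmap (n : ℕ) :
    ∃ x ∈ ball (0 : ℂ) 1, ∃ y ∈ ball (0 : ℂ) 1,
      qhDist (ball 0 1) x y ≤ 1 ∧ n * Real.log 2 ≤ qhDist (ball 0 1) (fmap x) (fmap y) := by
  set r := knot (n + 1)
  set R := knot (n + 2)
  have hr : 1 / 2 ≤ r := one_half_le_knot (by omega)
  have hrR : r ≤ R := (knot_le_knot_iff (by omega)).2 (by omega)
  have hR : R < 1 := knot_lt_one _
  obtain ⟨u, hu, hu1⟩ := exists_norm_eq_one_norm_sub_one_eq (s := (1 - r) / r)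
    ⟨by bound, (div_le_iff₀ (by linarith)).2 (by linarith)⟩
  have hmem {v : ℂ} (hv : ‖v‖ = 1) : r • v ∈ ball (0 : ℂ) 1 := by
    rw [mem_ball_zero_iff, norm_smul_of_nonneg (by linarith), hv, mul_one]
    exact knot_lt_one _
  have hf {v : ℂ} (hv : ‖v‖ = 1) : fmap (r • v) = R • v := by
    rw [fmap_smul (by linarith) hv, gfun_knot (by omega)]
  refine ⟨r • 1, hmem norm_one, r • u, hmem hu, ?_, ?_⟩
  · calc qhDist (ball 0 1) (r • 1) (r • u) ≤ r * ‖u - 1‖ / (1 - r) :=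
          qhDist_smul_le (by linarith) (knot_lt_one _) norm_one hu
      _ = 1 := by
          rw [hu1, mul_div_cancel₀ _ (by linarith : r ≠ 0),
            div_self (by linarith [knot_lt_one (n + 1)])]
  · rw [hf norm_one, hf hu]
    have hgrow : 1 - r ≤ R * ‖u - 1‖ := by
      rw [hu1, mul_div_left_comm]
      exact le_mul_of_one_le_right (by linarith) ((one_le_div (by linarith)).2 hrR)
    calc (n : ℝ) * Real.log 2
        ≤ (n + 1 : ℕ) * (n + 1).factorial * Real.log 2 := by
          gcongr
          push_cast
          nlinarith [show (1 : ℝ) ≤ (n + 1).factorial by exact_mod_cast (n + 1).factorial_pos]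
      _ = Real.log ((1 - r) / (1 - R)) := (log_one_sub_knot_div (n + 1)).symm
      _ ≤ Real.log (1 + R * ‖u - 1‖ / (1 - R)) := by
          refine Real.log_le_log (div_pos (by linarith [knot_lt_one (n + 1)]) (by linarith)) ?_
          linarith [div_le_div_of_nonneg_right hgrow (sub_nonneg.2 hR.le)]
      _ ≤ qhDist (ball 0 1) (R • 1) (R • u) :=
          log_le_qhDist_smul (by linarith) hR norm_one hu

theorem stmt13_general (φ : ℝ → ℝ)
    (hφmono : StrictMonoOn φ (Set.Ici 0)) :
    ¬ (∀ x ∈ Metric.ball (0 : ℂ) 1, ∀ y ∈ Metric.ball (0 : ℂ) 1,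
        qhDist (Metric.ball (0 : ℂ) 1) (fmap x) (fmap y) ≤
          φ (qhDist (Metric.ball (0 : ℂ) 1) x y) ∧
        qhDist (Metric.ball (0 : ℂ) 1) x y ≤
          φ (qhDist (Metric.ball (0 : ℂ) 1) (fmap x) (fmap y))) := by
  intro H
  obtain ⟨n, hn⟩ := exists_nat_gt (φ 1 / Real.log 2)
  rw [div_lt_iff₀ (Real.log_pos one_lt_two)] at hn
  obtain ⟨x, hx, y, hy, hxy, hfxy⟩ := exists_qhDist_le_one_le_qhDist_fmap n
  have hφ : φ (qhDist (ball 0 1) x y) ≤ φ 1 :=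
    hφmono.monotoneOn (qhDist_nonneg _ x y) (mem_Ici.2 zero_le_one) hxy
  linarith [(H x hx y hy).1]

/-- The restriction `f : B(1) → B(1)` of the map of Example 1
is not `φ`-FQC for any increasing self-homeomorphism `φ` of `[0,∞)`. -/
theorem stmt13 (φ : ℝ → ℝ)
    (hφmono : StrictMonoOn φ (Set.Ici 0))
    (hφcont : ContinuousOn φ (Set.Ici 0))
    (hφsurj : φ '' Set.Ici 0 = Set.Ici 0) :
    ¬ (∀ x ∈ Metric.ball (0 : ℂ) 1, ∀ y ∈ Metric.ball (0 : ℂ) 1,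
        qhDist (Metric.ball (0 : ℂ) 1) (fmap x) (fmap y) ≤
          φ (qhDist (Metric.ball (0 : ℂ) 1) x y) ∧
        qhDist (Metric.ball (0 : ℂ) 1) x y ≤
          φ (qhDist (Metric.ball (0 : ℂ) 1) (fmap x) (fmap y))) :=
  stmt13_general φ hφmono
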